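/- Let d ≥ 1, let P : M_d → M_d be a completely positive linear map, and let t ↦ B_t be a continuous family of completely positive linear maps on M_d. Let t ↦ V_t be the continuous solution of the modified non-Markovian master equation dV_t/dt = P V_t + ∫₀ᵗ B_{t−s} V_s ds with V_0 = id; equivalently, V_t = e^{tP} + ∫₀ᵗ ∫₀^{t−u} e^{(t−u−s)P} B_u V_s ds du. Then V_t is completely positive for every t ≥ 0. -/

import Mathlib

open scoped ComplexOrder

noncomputable instance (d : ℕ) : NormedAddCommGroup (Matrix (Fin d) (Fin d) ℂ) :=
  Matrix.frobeniusNormedAddCommGroup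

noncomputable instance (d : ℕ) : NormedSpace ℂ (Matrix (Fin d) (Fin d) ℂ) :=
  Matrix.frobeniusNormedSpace

noncomputable instance (d : ℕ) :
    NormedAddCommGroup (Matrix (Fin d) (Fin d) ℂ →L[ℂ] Matrix (Fin d) (Fin d) ℂ) :=
  ContinuousLinearMap.toNormedAddCommGroup

noncomputable instance (d : ℕ) :
    NormedSpace ℂ (Matrix (Fin d) (Fin d) ℂ →L[ℂ] Matrix (Fin d) (Fin d) ℂ) :=
  ContinuousLinearMap.toNormedSpace

instance (d : ℕ) :
    ContinuousSMul ℝ (Matrix (Fin d) (Fin d) ℂ →L[ℂ] Matrix (Fin d) (Fin d) ℂ) :=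
  @IsBoundedSMul.continuousSMul _ _ _ _ _ _ _ NormedSpace.toIsBoundedSMul

/-- A linear map `Φ` on the algebra `M_d` of `d × d` complex matrices is completely positive
if for every `n ≥ 1` the map `Φ ⊗ id` on `M_d ⊗ M_n` (realized on matrices indexed by
`Fin d × Fin n`) maps positive semidefinite matrices to positive semidefinite matrices. -/
def IsCompletelyPositive {d : ℕ}
    (Φ : Matrix (Fin d) (Fin d) ℂ →L[ℂ] Matrix (Fin d) (Fin d) ℂ) : Prop :=
  ∀ n : ℕ, 0 < n → ∀ M : Matrix (Fin d × Fin n) (Fin d × Fin n) ℂ, M.PosSemidef →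
    Matrix.PosSemidef (Matrix.of fun p q : Fin d × Fin n =>
      Φ (Matrix.of fun i j => M (i, p.2) (j, q.2)) p.1 q.1)

/-!
Let `K` be the closed convex cone of completely positive maps and `g t = dist (V t, K)`.
Composition with a completely positive map `Φ` maps `K` into itself and is `‖Φ‖`-Lipschitz, and
`dist (·, K)` is sublinear, hence passes under integrals by Jensen's inequality. So the right-hand
side `P V_t + ∫₀ᵗ B_{t-s} V_s ds` lies within `C (g t + ∫₀ᵗ g)` of `K`, and moving along it gives
the right Dini bound `D⁺g ≤ C (g + ∫₀ g)`. Then `f = g + ∫₀ g` satisfies `D⁺f ≤ (C + 1) f` and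
`f 0 = 0`, and Grönwall's inequality forces `g = 0`.
-/

open Metric MeasureTheory Set Filter Topology

theorem LipschitzWith.infDist_le_mul_of_mapsTo {α : Type*} [PseudoMetricSpace α] {f : α → α}
    {c : NNReal} {s : Set α} (hf : LipschitzWith c f) (hs : MapsTo f s s) (x : α) :
    infDist (f x) s ≤ c * infDist x s := by
  rcases s.eq_empty_or_nonempty with rfl | hne
  · simp
  have := hne.to_subtype
  calc infDist (f x) s ≤ ⨅ y : s, c * dist x y :=
        le_ciInf fun y => (infDist_le_dist_of_mem (hs y.2)).trans (hf.dist_le_mul x y)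
    _ = c * infDist x s := by
      rw [infDist_eq_iInf]; exact (Real.mul_iInf_of_nonneg c.2 _).symm

theorem eventually_intervalIntegral_le {g : ℝ → ℝ} {x b ε : ℝ} (hxb : x < b)
    (hg : ContinuousOn g (Icc x b)) (hε : 0 < ε) :
    ∀ᶠ z in 𝓝[>] x, ∫ s in x..z, g s ≤ (z - x) * (g x + ε) := by
  have hnear : ∀ᶠ s in 𝓝[≥] x, g s < g x + ε := by
    have := hg x (left_mem_Icc.2 hxb.le)
    rw [ContinuousWithinAt, nhdsWithin_Icc_eq_nhdsGE hxb] at this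
    exact this (Iio_mem_nhds (lt_add_of_pos_right _ hε))
  obtain ⟨u, hxu, hu⟩ := mem_nhdsGE_iff_exists_Ico_subset.1 hnear
  filter_upwards [Ioo_mem_nhdsGT (lt_min hxu hxb)] with z hz
  have hzu : z < u := hz.2.trans_le (min_le_left _ _)
  have hzb : z ≤ b := hz.2.le.trans (min_le_right _ _)
  calc ∫ s in x..z, g s ≤ ∫ _ in x..z, (g x + ε) :=
        intervalIntegral.integral_mono_on hz.1.le
          ((hg.mono (Icc_subset_Icc_right hzb)).intervalIntegrable_of_Icc hz.1.le)
          intervalIntegrable_const fun s hs => (hu ⟨hs.1, hs.2.trans_lt hzu⟩).le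
    _ = (z - x) * (g x + ε) := by rw [intervalIntegral.integral_const, smul_eq_mul]

theorem eqOn_zero_of_eventually_le_add_mul_integral {g : ℝ → ℝ} {C T : ℝ}
    (hg : ContinuousOn g (Icc 0 T)) (hg_nonneg : ∀ x ∈ Icc 0 T, 0 ≤ g x) (hg0 : g 0 = 0)
    (hle : ∀ x ∈ Ico 0 T, ∀ ε > 0, ∀ᶠ z in 𝓝[>] x,
      g z ≤ g x + (z - x) * (C * (g x + ∫ s in 0..x, g s) + ε)) :
    EqOn g 0 (Icc 0 T) := by
  rcases lt_or_ge T 0 with hT | hT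
  · exact fun x hx => absurd (hx.1.trans hx.2) hT.not_ge
  have hg_int : ∀ x ∈ Icc 0 T, IntervalIntegrable g volume 0 x := fun x hx =>
    (hg.mono (Icc_subset_Icc_right hx.2)).intervalIntegrable_of_Icc hx.1
  set f : ℝ → ℝ := fun x => g x + ∫ s in 0..x, g s
  have hint_nonneg : ∀ x ∈ Icc 0 T, 0 ≤ ∫ s in 0..x, g s := fun x hx =>
    intervalIntegral.integral_nonneg hx.1 fun s hs => hg_nonneg s ⟨hs.1, hs.2.trans hx.2⟩
  have hf_cont : ContinuousOn f (Icc 0 T) := by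
    refine hg.add ?_
    simpa [uIcc_of_le hT] using
      intervalIntegral.continuousOn_primitive_interval' (hg_int T ⟨hT, le_rfl⟩) left_mem_uIcc
  have hf_deriv : ∀ x ∈ Ico 0 T, ∀ r, (C + 1) * f x < r →
      ∃ᶠ z in 𝓝[>] x, (z - x)⁻¹ * (f z - f x) < r := by
    intro x hx r hr
    set ε := (r - (C + 1) * f x) / 3 with hε_def
    have hε : 0 < ε := div_pos (sub_pos.2 hr) three_pos
    refine Eventually.frequently ?_
    filter_upwards [hle x hx ε hε,
      eventually_intervalIntegral_le hx.2 (hg.mono (Icc_subset_Icc_left hx.1)) hε,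
      Ioo_mem_nhdsGT hx.2] with z hgz hint hz
    have hzx : 0 < z - x := sub_pos.2 hz.1
    have hsplit : f z - f x = g z - g x + ∫ s in x..z, g s := by
      rw [← intervalIntegral.integral_interval_sub_left (hg_int z ⟨hx.1.trans hz.1.le, hz.2.le⟩)
        (hg_int x (Ico_subset_Icc_self hx))]
      ring
    have hgf : (z - x) * g x ≤ (z - x) * f x := mul_le_mul_of_nonneg_left
      (le_add_of_nonneg_right (hint_nonneg x (Ico_subset_Icc_self hx))) hzx.le
    have : (z - x)⁻¹ * (f z - f x) ≤ (C + 1) * f x + 2 * ε := by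
      rw [inv_mul_le_iff₀ hzx]
      linarith
    linarith
  intro x hx
  have hfx : g x + ∫ s in 0..x, g s ≤ 0 := by
    simpa [gronwallBound_ε0_δ0] using
      le_gronwallBound_of_liminf_deriv_right_le (δ := 0) hf_cont hf_deriv (by simp [f, hg0])
        (fun x _ => (add_zero ((C + 1) * f x)).ge) x hx
  show g x = 0
  linarith [hg_nonneg x hx, hint_nonneg x hx]

namespace PointedCone

variable {F : Type*} [NormedAddCommGroup F] [NormedSpace ℝ F] (K : PointedCone ℝ F)

theorem infDist_add_le (a b : F) : infDist (a + b) K ≤ infDist a K + infDist b K := by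
  refine le_of_forall_pos_lt_add fun ε hε => ?_
  obtain ⟨x, hx, hax⟩ := (infDist_lt_iff ⟨0, K.zero_mem⟩).1
    (lt_add_of_pos_right (infDist a K) (half_pos hε))
  obtain ⟨y, hy, hby⟩ := (infDist_lt_iff ⟨0, K.zero_mem⟩).1
    (lt_add_of_pos_right (infDist b K) (half_pos hε))
  calc infDist (a + b) K ≤ dist (a + b) (x + y) := infDist_le_dist_of_mem (K.add_mem hx hy)
    _ ≤ dist a x + dist b y := dist_add_add_le a b x y
    _ < infDist a K + infDist b K + ε := by linarith

theorem infDist_smul_le {r : ℝ} (hr : 0 ≤ r) (a : F) : infDist (r • a) K ≤ r * infDist a K := by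
  have hK : MapsTo (r • ·) (K : Set F) K := fun _ hx => K.smul_mem hr hx
  have hr' : LipschitzWith ⟨r, hr⟩ (r • · : F → F) :=
    .of_dist_le_mul fun x y => by
      rw [dist_smul₀, Real.norm_of_nonneg hr]; rfl
  exact hr'.infDist_le_mul_of_mapsTo hK a

theorem convexOn_infDist : ConvexOn ℝ univ (infDist · (K : Set F)) :=
  ⟨convex_univ, fun x _ y _ _ _ ha hb _ =>
    (K.infDist_add_le _ _).trans (add_le_add (K.infDist_smul_le ha x) (K.infDist_smul_le hb y))⟩

theorem infDist_integral_le {α : Type*} [MeasurableSpace α] {μ : Measure α}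
    [IsFiniteMeasure μ] {f : α → F} (hf : Integrable f μ) :
    infDist (∫ x, f x ∂μ) K ≤ ∫ x, infDist (f x) K ∂μ := by
  by_cases hF : CompleteSpace F
  swap
  · rw [integral_of_not_completeSpace hF, infDist_zero_of_mem K.zero_mem]
    exact integral_nonneg fun _ => infDist_nonneg
  rcases eq_zero_or_neZero μ with rfl | _
  · simp [infDist_zero_of_mem K.zero_mem]
  have hg : Integrable (fun x => infDist (f x) K) μ :=
    hf.norm.mono' ((continuous_infDist_pt _).comp_aestronglyMeasurable hf.1) <|
      ae_of_all _ fun x => by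
        simpa [abs_of_nonneg infDist_nonneg] using infDist_le_dist_of_mem (x := f x) K.zero_mem
  have jensen := K.convexOn_infDist.map_average_le (continuous_infDist_pt _).continuousOn
    isClosed_univ (ae_of_all _ fun _ => mem_univ _) hf hg
  calc infDist (∫ x, f x ∂μ) K = infDist (μ.real univ • ⨍ x, f x ∂μ) K := by
        rw [measure_smul_average]
    _ ≤ μ.real univ * infDist (⨍ x, f x ∂μ) K := K.infDist_smul_le measureReal_nonneg _
    _ ≤ μ.real univ * ⨍ x, infDist (f x) K ∂μ := by gcongr
    _ = ∫ x, infDist (f x) K ∂μ := measure_smul_average μ _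

theorem infDist_intervalIntegral_le {f : ℝ → F} {a b : ℝ} (hab : a ≤ b)
    (hf : IntervalIntegrable f volume a b) :
    infDist (∫ s in a..b, f s) K ≤ ∫ s in a..b, infDist (f s) K := by
  simp only [intervalIntegral.integral_of_le hab]
  exact K.infDist_integral_le hf.1

theorem eventually_infDist_le_of_hasDerivWithinAt {V : ℝ → F} {D : F} {x ε : ℝ}
    (hV : HasDerivWithinAt V D (Ioi x) x) (hε : 0 < ε) :
    ∀ᶠ z in 𝓝[>] x, infDist (V z) K ≤ infDist (V x) K + (z - x) * (infDist D K + ε) := by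
  filter_upwards [(hasDerivWithinAt_iff_isLittleO.1 hV).def hε, self_mem_nhdsWithin]
    with z hz hxz
  have hzx : 0 ≤ z - x := sub_nonneg.2 (le_of_lt hxz)
  calc infDist (V z) K ≤ infDist (V x + (z - x) • D) K + dist (V z) (V x + (z - x) • D) :=
        infDist_le_infDist_add_dist
    _ ≤ infDist (V x) K + (z - x) * infDist D K + ε * (z - x) := by
        gcongr
        · exact (K.infDist_add_le _ _).trans (add_le_add_right (K.infDist_smul_le hzx D) _)
        · rw [dist_eq_norm, ← sub_sub]
          simpa [abs_of_nonneg hzx] using hz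
    _ = infDist (V x) K + (z - x) * (infDist D K + ε) := by ring

theorem mapsTo_of_infDist_deriv_le {V D : ℝ → F} {C T : ℝ} (hK : IsClosed (K : Set F))
    (hV : ContinuousOn V (Icc 0 T)) (hV0 : V 0 ∈ K)
    (hVD : ∀ t ∈ Ico 0 T, HasDerivWithinAt V (D t) (Ioi t) t)
    (hD : ∀ t ∈ Ico 0 T,
      infDist (D t) K ≤ C * (infDist (V t) K + ∫ s in 0..t, infDist (V s) K)) :
    MapsTo V (Icc 0 T) K := by
  have hdist : EqOn (fun t => infDist (V t) K) 0 (Icc 0 T) := by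
    refine eqOn_zero_of_eventually_le_add_mul_integral (C := C)
      ((continuous_infDist_pt _).comp_continuousOn hV) (fun _ _ => infDist_nonneg)
      (infDist_zero_of_mem hV0) fun t ht ε hε => ?_
    filter_upwards [K.eventually_infDist_le_of_hasDerivWithinAt (hVD t ht) hε,
      self_mem_nhdsWithin] with z hz htz
    have : 0 ≤ z - t := sub_nonneg.2 (le_of_lt htz)
    exact hz.trans (by gcongr; exact hD t ht)
  exact fun _ ht => (hK.mem_iff_infDist_zero ⟨0, K.zero_mem⟩).2 (hdist ht)

end PointedCone

theorem Matrix.isClosed_setOf_posSemidef {ι 𝕜 : Type*} [Fintype ι] [RCLike 𝕜] :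
    IsClosed {A : Matrix ι ι 𝕜 | A.PosSemidef} := by
  simp only [Matrix.posSemidef_iff_dotProduct_mulVec, Set.ofPred_and, Set.ofPred_forall]
  refine (isClosed_eq continuous_id.matrix_conjTranspose continuous_id).inter
    (isClosed_iInter fun x => isClosed_le continuous_const ?_)
  fun_prop

local notation "𝕄[" d "]" => Matrix (Fin d) (Fin d) ℂ

variable {d : ℕ}

noncomputable def ampliation (n : ℕ) (M : Matrix (Fin d × Fin n) (Fin d × Fin n) ℂ) :
    (𝕄[d] →L[ℂ] 𝕄[d]) →ₗ[ℂ] Matrix (Fin d × Fin n) (Fin d × Fin n) ℂ where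
  toFun Φ := Matrix.of fun p q => Φ (Matrix.of fun i j => M (i, p.2) (j, q.2)) p.1 q.1
  map_add' Φ Ψ := by ext; simp
  map_smul' c Φ := by ext; simp

theorem isCompletelyPositive_iff_ampliation {Φ : 𝕄[d] →L[ℂ] 𝕄[d]} :
    IsCompletelyPositive Φ ↔
      ∀ n, 0 < n → ∀ M, Matrix.PosSemidef M → (ampliation n M Φ).PosSemidef :=
  Iff.rfl

theorem isCompletelyPositive_id : IsCompletelyPositive (ContinuousLinearMap.id ℂ 𝕄[d]) :=
  fun _ _ _ hM => hM

theorem IsCompletelyPositive.comp {Φ Ψ : 𝕄[d] →L[ℂ] 𝕄[d]} (hΦ : IsCompletelyPositive Φ)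
    (hΨ : IsCompletelyPositive Ψ) : IsCompletelyPositive (Φ.comp Ψ) :=
  fun n hn M hM => hΦ n hn (ampliation n M Ψ) (hΨ n hn M hM)

variable (d) in
def completelyPositiveCone : PointedCone ℝ (𝕄[d] →L[ℂ] 𝕄[d]) where
  carrier := {Φ | IsCompletelyPositive Φ}
  zero_mem' := isCompletelyPositive_iff_ampliation.2 fun n _ M _ => by
    rw [map_zero]; exact .zero
  add_mem' {Φ Ψ} hΦ hΨ := isCompletelyPositive_iff_ampliation.2 fun n hn M hM => by
    rw [map_add]; exact (hΦ n hn M hM).add (hΨ n hn M hM)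
  smul_mem' c Φ hΦ := isCompletelyPositive_iff_ampliation.2 fun n hn M hM => by
    rw [LinearMap.map_smul_of_tower]; exact (hΦ n hn M hM).smul c.2

theorem isClosed_completelyPositiveCone :
    IsClosed (completelyPositiveCone d : Set (𝕄[d] →L[ℂ] 𝕄[d])) := by
  have : (completelyPositiveCone d : Set (𝕄[d] →L[ℂ] 𝕄[d])) =
      ⋂ (n) (_ : 0 < n) (M : Matrix (Fin d × Fin n) (Fin d × Fin n) ℂ) (_ : M.PosSemidef),
        ampliation n M ⁻¹' {A | A.PosSemidef} := by
    ext Φ; simp [completelyPositiveCone, isCompletelyPositive_iff_ampliation]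
  rw [this]
  exact isClosed_iInter fun n => isClosed_iInter fun _ => isClosed_iInter fun M =>
    isClosed_iInter fun _ =>
      Matrix.isClosed_setOf_posSemidef.preimage (LinearMap.continuous_of_finiteDimensional _)

theorem infDist_comp_completelyPositiveCone_le {Φ : 𝕄[d] →L[ℂ] 𝕄[d]} (hΦ : IsCompletelyPositive Φ)
    (X : 𝕄[d] →L[ℂ] 𝕄[d]) :
    infDist (Φ.comp X) (completelyPositiveCone d) ≤ ‖Φ‖ * infDist X (completelyPositiveCone d) := by
  have hlip : LipschitzWith ‖Φ‖₊ fun Y : 𝕄[d] →L[ℂ] 𝕄[d] => Φ.comp Y :=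
    .of_dist_le_mul fun X Y => by
      rw [dist_eq_norm, dist_eq_norm, coe_nnnorm]
      exact (congrArg norm (Φ.comp_sub X Y).symm).trans_le (Φ.opNorm_comp_le _)
  exact hlip.infDist_le_mul_of_mapsTo (s := completelyPositiveCone d) (fun _ hΨ => hΦ.comp hΨ) X

theorem infDist_volterra_le {P : 𝕄[d] →L[ℂ] 𝕄[d]} (hP : IsCompletelyPositive P)
    {B V : ℝ → 𝕄[d] →L[ℂ] 𝕄[d]} (hB_cp : ∀ t, 0 ≤ t → IsCompletelyPositive (B t)) {x C : ℝ}
    (hx : 0 ≤ x) (hB : ContinuousOn B (Icc 0 x)) (hV : ContinuousOn V (Icc 0 x))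
    (hPC : ‖P‖ ≤ C) (hBC : ∀ s ∈ Icc 0 x, ‖B s‖ ≤ C) :
    infDist (P.comp (V x) + ∫ s in 0..x, (B (x - s)).comp (V s)) (completelyPositiveCone d) ≤
      C * (infDist (V x) (completelyPositiveCone d) +
        ∫ s in 0..x, infDist (V s) (completelyPositiveCone d)) := by
  set K := completelyPositiveCone d
  have hsub : ∀ s ∈ Icc 0 x, x - s ∈ Icc 0 x := fun s hs => ⟨sub_nonneg.2 hs.2, sub_le_self _ hs.1⟩
  have hBV : ContinuousOn (fun s => (B (x - s)).comp (V s)) (Icc 0 x) :=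
    (hB.comp (continuousOn_const.sub continuousOn_id) hsub).clm_comp hV
  have hdist : ContinuousOn (fun s => infDist (V s) K) (Icc 0 x) :=
    (continuous_infDist_pt _).comp_continuousOn hV
  have hint : ∫ s in 0..x, infDist ((B (x - s)).comp (V s)) K ≤
      C * ∫ s in 0..x, infDist (V s) K := by
    rw [← intervalIntegral.integral_const_mul]
    refine intervalIntegral.integral_mono_on hx
      (((continuous_infDist_pt _).comp_continuousOn hBV).intervalIntegrable_of_Icc hx)
      ((hdist.intervalIntegrable_of_Icc hx).const_mul C) fun s hs => ?_
    calc infDist ((B (x - s)).comp (V s)) K ≤ ‖B (x - s)‖ * infDist (V s) K :=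
          infDist_comp_completelyPositiveCone_le (hB_cp _ (hsub s hs).1) _
      _ ≤ C * infDist (V s) K := mul_le_mul_of_nonneg_right (hBC _ (hsub s hs)) infDist_nonneg
  calc infDist (P.comp (V x) + ∫ s in 0..x, (B (x - s)).comp (V s)) K
      ≤ infDist (P.comp (V x)) K + infDist (∫ s in 0..x, (B (x - s)).comp (V s)) K :=
        K.infDist_add_le _ _
    _ ≤ ‖P‖ * infDist (V x) K + ∫ s in 0..x, infDist ((B (x - s)).comp (V s)) K :=
        add_le_add (infDist_comp_completelyPositiveCone_le hP _)
          (K.infDist_intervalIntegral_le hx (hBV.intervalIntegrable_of_Icc hx))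
    _ ≤ C * infDist (V x) K + C * ∫ s in 0..x, infDist (V s) K :=
        add_le_add (mul_le_mul_of_nonneg_right hPC infDist_nonneg) hint
    _ = C * (infDist (V x) K + ∫ s in 0..x, infDist (V s) K) := (mul_add _ _ _).symm

theorem modified_nonMarkovian_completelyPositive_general
    {d : ℕ}
    (P : Matrix (Fin d) (Fin d) ℂ →L[ℂ] Matrix (Fin d) (Fin d) ℂ)
    (hP : IsCompletelyPositive P)
    (B : ℝ → (Matrix (Fin d) (Fin d) ℂ →L[ℂ] Matrix (Fin d) (Fin d) ℂ))
    (hBcont : ContinuousOn B (Set.Ici 0))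
    (hBcp : ∀ t, 0 ≤ t → IsCompletelyPositive (B t))
    (V : ℝ → (Matrix (Fin d) (Fin d) ℂ →L[ℂ] Matrix (Fin d) (Fin d) ℂ))
    (hVcont : ContinuousOn V (Set.Ici 0))
    (hV0 : V 0 = ContinuousLinearMap.id ℂ _)
    (hVeq : ∀ t ∈ Set.Ici (0 : ℝ), HasDerivWithinAt V
      (P.comp (V t) + ∫ s in (0 : ℝ)..t, (B (t - s)).comp (V s)) (Set.Ici 0) t) :
    ∀ t, 0 ≤ t → IsCompletelyPositive (V t) := by
  intro T hT
  obtain ⟨MB, hMB⟩ := isCompact_Icc.exists_bound_of_continuousOn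
    (hBcont.mono Icc_subset_Ici_self : ContinuousOn B (Icc 0 T))
  refine (completelyPositiveCone d).mapsTo_of_infDist_deriv_le (C := max ‖P‖ MB)
    isClosed_completelyPositiveCone (hVcont.mono Icc_subset_Ici_self)
    (by rw [hV0]; exact isCompletelyPositive_id)
    (fun t ht => (hVeq t ht.1).mono (Ioi_subset_Ici ht.1)) (fun t ht => ?_) ⟨hT, le_rfl⟩
  exact infDist_volterra_le (x := t) hP hBcp ht.1 (hBcont.mono Icc_subset_Ici_self)
    (hVcont.mono Icc_subset_Ici_self) (le_max_left _ _)
    fun s hs => (hMB s ⟨hs.1, hs.2.trans ht.2.le⟩).trans (le_max_right _ _)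

/-- The solution of the modified non-Markovian master equation
`dV_t/dt = P V_t + ∫₀ᵗ B_{t−s} V_s ds`, `V_0 = id`, with `P` and all `B_t` completely positive,
is completely positive for every `t ≥ 0`. -/
theorem modified_nonMarkovian_completelyPositive
    {d : ℕ} (hd : 1 ≤ d)
    (P : Matrix (Fin d) (Fin d) ℂ →L[ℂ] Matrix (Fin d) (Fin d) ℂ)
    (hP : IsCompletelyPositive P)
    (B : ℝ → (Matrix (Fin d) (Fin d) ℂ →L[ℂ] Matrix (Fin d) (Fin d) ℂ))
    (hBcont : ContinuousOn B (Set.Ici 0))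
    (hBcp : ∀ t, 0 ≤ t → IsCompletelyPositive (B t))
    (V : ℝ → (Matrix (Fin d) (Fin d) ℂ →L[ℂ] Matrix (Fin d) (Fin d) ℂ))
    (hVcont : ContinuousOn V (Set.Ici 0))
    (hV0 : V 0 = ContinuousLinearMap.id ℂ _)
    (hVeq : ∀ t ∈ Set.Ici (0 : ℝ), HasDerivWithinAt V
      (P.comp (V t) + ∫ s in (0 : ℝ)..t, (B (t - s)).comp (V s)) (Set.Ici 0) t) :
    ∀ t, 0 ≤ t → IsCompletelyPositive (V t) :=
  modified_nonMarkovian_completelyPositive_general P hP B hBcont hBcp V hVcont hV0 hVeq
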